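/- Let B be a simple bipartite graph with bipartition V(B) = W ⊎ U, G its half-square, D = (T, β_D) a nice tree decomposition of B, and D' = (T, β_{D'}) the derived decomposition of G. Let t be a join node of D with children t1 and t2. Then Original(t) = Original(t1) = Original(t2), Cliques(t) = Cliques(t1) = Cliques(t2), Fake(t1) ∩ Fake(t2) = ∅, and Fake(t) = Fake(t1) ∪ Fake(t2). -/

import Mathlib

open SimpleGraph

section Defs

variable {V : Type*} {ι : Type*}

/-- `W, U` is a bipartition of the simple graph `B`. -/
def IsBipartition (B : SimpleGraph V) (W U : Set V) : Prop :=
  (∀ v, v ∈ W ∨ v ∈ U) ∧ (∀ v, ¬(v ∈ W ∧ v ∈ U)) ∧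
    ∀ ⦃a b⦄, B.Adj a b → (a ∈ W ∧ b ∈ U) ∨ (a ∈ U ∧ b ∈ W)

/-- The half-square of `B` on side `W`: two distinct vertices of `W` are adjacent
iff they have a common neighbor in `B`. -/
def halfSquare (B : SimpleGraph V) (W : Set V) : SimpleGraph V where
  Adj a b := a ≠ b ∧ a ∈ W ∧ b ∈ W ∧ ∃ s, B.Adj a s ∧ B.Adj b s
  symm := by
    constructor
    rintro a b ⟨hne, ha, hb, s, h1, h2⟩
    exact ⟨hne.symm, hb, ha, s, h2, h1⟩
  loopless := by constructor; rintro a ⟨hne, _⟩; exact hne rfl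

/-- Tree decomposition of the graph `H` with vertex set `S`, over the tree `T`. -/
structure IsTreeDecompOn (H : SimpleGraph V) (S : Set V) (T : SimpleGraph ι)
    (β : ι → Set V) : Prop where
  covers : ∀ v ∈ S, ∃ t, v ∈ β t
  edge_mem : ∀ ⦃u v⦄, H.Adj u v → ∃ t, u ∈ β t ∧ v ∈ β t
  conn : ∀ v ∈ S, (T.induce {t | v ∈ β t}).Connected

/-- `t'` is a descendant of `t` (inclusively) in the tree `T` rooted at `r`:
`t` lies on every path from `t'` to the root. -/
def Desc (T : SimpleGraph ι) (r : ι) (t t' : ι) : Prop :=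
  ∀ p : T.Walk t' r, p.IsPath → t ∈ p.support

/-- `γ(t)`: union of the bags of `t` and of all its descendants. -/
def gammaSet (T : SimpleGraph ι) (r : ι) (β : ι → Set V) (t : ι) : Set V :=
  ⋃ t' ∈ {t' | Desc T r t t'}, β t'

/-- The bag of the derived decomposition. -/
def derivedBag (B : SimpleGraph V) (W U : Set V) (T : SimpleGraph ι) (r : ι)
    (β : ι → Set V) (t : ι) : Set V :=
  (β t ∩ W) ∪ ⋃ s ∈ β t ∩ U, B.neighborSet s ∩ gammaSet T r β t

def originalSet (B : SimpleGraph V) (W U : Set V) (T : SimpleGraph ι) (r : ι)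
    (β : ι → Set V) (t : ι) : Set V :=
  β t ∩ derivedBag B W U T r β t

def fakeSet (B : SimpleGraph V) (W U : Set V) (T : SimpleGraph ι) (r : ι)
    (β : ι → Set V) (t : ι) : Set V :=
  derivedBag B W U T r β t \ β t

def cliquesAt (B : SimpleGraph V) (U : Set V) (β : ι → Set V) (t : ι) : Set (Set V) :=
  {K | ∃ s ∈ β t ∩ U, K = B.neighborSet s}

def IsChild (T : SimpleGraph ι) (r : ι) (t t' : ι) : Prop :=
  T.Adj t t' ∧ Desc T r t t'

def IsLeafNode (T : SimpleGraph ι) (r : ι) (β : ι → Set V) (t : ι) : Prop :=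
  (∀ t', ¬ IsChild T r t t') ∧ β t = ∅

def IsForgetNode (T : SimpleGraph ι) (r : ι) (β : ι → Set V) (w : V) (t : ι) : Prop :=
  ∃ t', IsChild T r t t' ∧ (∀ t'', IsChild T r t t'' → t'' = t') ∧
    w ∈ β t' ∧ β t = β t' \ {w}

def IsIntroduceNode (T : SimpleGraph ι) (r : ι) (β : ι → Set V) (w : V) (t : ι) : Prop :=
  ∃ t', IsChild T r t t' ∧ (∀ t'', IsChild T r t t'' → t'' = t') ∧
    w ∈ β t ∧ β t \ {w} = β t'

def IsJoinNode (T : SimpleGraph ι) (r : ι) (β : ι → Set V) (t : ι) : Prop :=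
  ∃ t₁ t₂, t₁ ≠ t₂ ∧ IsChild T r t t₁ ∧ IsChild T r t t₂ ∧
    (∀ t'', IsChild T r t t'' → t'' = t₁ ∨ t'' = t₂) ∧ β t = β t₁ ∧ β t = β t₂

/-- A nice (rooted) tree decomposition. -/
def IsNice (T : SimpleGraph ι) (r : ι) (β : ι → Set V) : Prop :=
  β r = ∅ ∧ ∀ t, IsLeafNode T r β t ∨ (∃ w, IsForgetNode T r β w t) ∨
    (∃ w, IsIntroduceNode T r β w t) ∨ IsJoinNode T r β t

/-- `E(X)`: edges of `G` with both endpoints in `X`. -/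
def edgesIn (G : SimpleGraph V) (X : Set V) : Set (Sym2 V) :=
  {e | e ∈ G.edgeSet ∧ ∀ x ∈ e, x ∈ X}

end Defs

/-!
At a join node the three bags coincide, and `Original` and `Cliques` depend on the bag alone.
A fake vertex of `t` lies in `γ(t) ∖ β(t)`, hence in `γ(c)` for a child `c` of `t`, and is fake
at `c` since `β(c) = β(t)`. A vertex of `γ(t₁) ∩ γ(t₂)` lies in a bag below `t₁` and in a bag
below `t₂`; every walk of `T` between them passes through `t₂`, so the vertex lies in `β(t₂)`
by connectivity of its subtree, and is not fake at `t₂`. The facts about the rooted tree all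
follow from the metric description of ancestry: `t` lies above `s` iff
`d(s, t) + d(t, r) = d(s, r)`.
-/

namespace SimpleGraph.IsTree

variable {ι : Type*} {T : SimpleGraph ι} {u v x : ι}

lemma length_eq_dist (hT : T.IsTree) {p : T.Walk u v} (hp : p.IsPath) :
    p.length = T.dist u v := by
  obtain ⟨q, hq, hql⟩ := hT.connected.exists_path_of_dist u v
  rw [(hT.existsUnique_path u v).unique hp hq, hql]

lemma mem_support_iff_dist (hT : T.IsTree) {p : T.Walk u v} (hp : p.IsPath) :
    x ∈ p.support ↔ T.dist u x + T.dist x v = T.dist u v := by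
  classical
  constructor
  · intro hx
    rw [← hT.length_eq_dist (hp.takeUntil hx), ← hT.length_eq_dist (hp.dropUntil hx),
      ← hT.length_eq_dist hp, ← Walk.length_append, p.take_spec hx]
  · intro hx
    obtain ⟨q₁, -, hq₁⟩ := hT.connected.exists_path_of_dist u x
    obtain ⟨q₂, -, hq₂⟩ := hT.connected.exists_path_of_dist x v
    have hq : (q₁.append q₂).IsPath :=
      Walk.isPath_of_length_eq_dist _ (by rw [Walk.length_append, hq₁, hq₂, hx])
    rw [← (hT.existsUnique_path u v).unique hq hp]
    exact Walk.mem_support_append_iff _ _ |>.mpr (Or.inl q₁.end_mem_support)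

lemma getVert_dist (hT : T.IsTree) {p : T.Walk u v} (hp : p.IsPath) (hx : x ∈ p.support) :
    p.getVert (T.dist u x) = x := by
  classical
  rw [← hT.length_eq_dist (hp.takeUntil hx), p.getVert_length_takeUntil hx]

end SimpleGraph.IsTree

section RootedTree

variable {ι : Type*} {T : SimpleGraph ι} {r : ι}

lemma Desc.refl (t : ι) : Desc T r t t := fun p _ => p.start_mem_support

lemma Desc.mem_support {t s : ι} (h : Desc T r t s) (w : T.Walk s r) : t ∈ w.support := by
  classical
  exact w.support_bypass_subset_support (h w.bypass w.bypass_isPath)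

lemma Desc.trans {a b c : ι} (hab : Desc T r a b) (hbc : Desc T r b c) : Desc T r a c := by
  classical
  intro p hp
  have hb : b ∈ p.support := hbc p hp
  exact p.support_dropUntil_subset_support hb (hab.mem_support (p.dropUntil b hb))

lemma desc_iff_mem_support (hT : T.IsTree) {t s : ι} {p : T.Walk s r} (hp : p.IsPath) :
    Desc T r t s ↔ t ∈ p.support :=
  ⟨fun h => h p hp, fun ht _ hq => (hT.existsUnique_path s r).unique hp hq ▸ ht⟩

lemma desc_iff_dist (hT : T.IsTree) {t s : ι} :
    Desc T r t s ↔ T.dist s t + T.dist t r = T.dist s r := by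
  obtain ⟨p, hp, -⟩ := hT.existsUnique_path s r
  rw [desc_iff_mem_support hT hp, hT.mem_support_iff_dist hp]

lemma IsChild.dist_root_eq (hT : T.IsTree) {t c : ι} (h : IsChild T r t c) :
    T.dist c r = T.dist t r + 1 := by
  have := (desc_iff_dist hT).mp h.2
  rw [SimpleGraph.dist_eq_one_iff_adj.mpr h.1.symm] at this
  omega

lemma Desc.eq_of_dist_root_eq (hT : T.IsTree) {a b s : ι} (ha : Desc T r a s)
    (hb : Desc T r b s) (h : T.dist a r = T.dist b r) : a = b := by
  obtain ⟨p, hp, -⟩ := hT.existsUnique_path s r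
  have hsa := (desc_iff_dist hT).mp ha
  have hsb := (desc_iff_dist hT).mp hb
  have hdist : T.dist s a = T.dist s b := by omega
  rw [← hT.getVert_dist hp (ha p hp), ← hT.getVert_dist hp (hb p hp), hdist]

lemma IsChild.eq_of_desc (hT : T.IsTree) {t t₁ t₂ s : ι} (h₁ : IsChild T r t t₁)
    (h₂ : IsChild T r t t₂) (hs₁ : Desc T r t₁ s) (hs₂ : Desc T r t₂ s) : t₁ = t₂ :=
  hs₁.eq_of_dist_root_eq hT hs₂ (by rw [h₁.dist_root_eq hT, h₂.dist_root_eq hT])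

lemma Desc.exists_isChild (hT : T.IsTree) {t s : ι} (h : Desc T r t s) (hne : s ≠ t) :
    ∃ c, IsChild T r t c ∧ Desc T r c s := by
  rw [desc_iff_dist hT] at h
  -- the child is the last vertex before `t` on a geodesic from `s`
  obtain ⟨q, -, hq⟩ := hT.connected.exists_path_of_dist s t
  have hqn : ¬ q.Nil := Walk.not_nil_of_ne hne
  have hadj : T.Adj q.penultimate t := q.adj_penultimate hqn
  have hsc : T.dist s q.penultimate + 1 ≤ T.dist s t := by
    have := q.length_dropLast_add_one hqn
    have := T.dist_le q.dropLast
    omega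
  have hct : T.dist q.penultimate t = 1 := SimpleGraph.dist_eq_one_iff_adj.mpr hadj
  have hscr := hT.connected.dist_triangle (u := s) (v := q.penultimate) (w := r)
  have hctr := hT.connected.dist_triangle (u := q.penultimate) (v := t) (w := r)
  exact ⟨q.penultimate, ⟨hadj.symm, (desc_iff_dist hT).mpr (by omega)⟩,
    (desc_iff_dist hT).mpr (by omega)⟩

lemma mem_support_of_desc_of_not_desc {x s₁ s₂ : ι} (h₁ : ¬ Desc T r x s₁)
    (h₂ : Desc T r x s₂) (w : T.Walk s₁ s₂) : x ∈ w.support := by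
  obtain ⟨p, -, hx⟩ : ∃ p : T.Walk s₁ r, p.IsPath ∧ x ∉ p.support := by
    simpa [Desc] using h₁
  have := h₂.mem_support (w.reverse.append p)
  rw [Walk.mem_support_append_iff, Walk.support_reverse, List.mem_reverse] at this
  exact this.resolve_right hx

end RootedTree

section Decomposition

variable {V ι : Type*} {T : SimpleGraph ι} {r : ι} {β : ι → Set V}

lemma mem_gammaSet {v : V} {t : ι} :
    v ∈ gammaSet T r β t ↔ ∃ s, Desc T r t s ∧ v ∈ β s := by
  simp [gammaSet]

lemma bag_subset_gammaSet (t : ι) : β t ⊆ gammaSet T r β t :=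
  fun _ hv => mem_gammaSet.mpr ⟨t, Desc.refl t, hv⟩

lemma Desc.gammaSet_subset {a b : ι} (h : Desc T r a b) :
    gammaSet T r β b ⊆ gammaSet T r β a := by
  intro v hv
  obtain ⟨s, hs, hvs⟩ := mem_gammaSet.mp hv
  exact mem_gammaSet.mpr ⟨s, h.trans hs, hvs⟩

lemma gammaSet_eq_union_isChild (hT : T.IsTree) (t : ι) :
    gammaSet T r β t = β t ∪ ⋃ c ∈ {c | IsChild T r t c}, gammaSet T r β c := by
  refine subset_antisymm (fun v hv => ?_) (Set.union_subset (bag_subset_gammaSet t)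
    (Set.iUnion₂_subset fun c hc => hc.2.gammaSet_subset))
  obtain ⟨s, hs, hvs⟩ := mem_gammaSet.mp hv
  obtain rfl | hne := eq_or_ne s t
  · exact Or.inl hvs
  obtain ⟨c, hc, hcs⟩ := hs.exists_isChild hT hne
  exact Or.inr (Set.mem_biUnion hc (mem_gammaSet.mpr ⟨s, hcs, hvs⟩))

lemma IsTreeDecompOn.mem_bag_of_mem_support {H : SimpleGraph V} {S : Set V}
    (hD : IsTreeDecompOn H S T β) {v : V} (hv : v ∈ S) {s₁ s₂ x : ι} (h₁ : v ∈ β s₁)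
    (h₂ : v ∈ β s₂) (hx : ∀ w : T.Walk s₁ s₂, x ∈ w.support) : v ∈ β x := by
  obtain ⟨w⟩ := (hD.conn v hv).preconnected ⟨s₁, h₁⟩ ⟨s₂, h₂⟩
  let f : T.induce {t | v ∈ β t} →g T := ⟨Subtype.val, id⟩
  obtain ⟨⟨y, hy⟩, -, rfl⟩ := List.mem_map.mp (Walk.support_map f w ▸ hx (w.map f))
  exact hy

lemma gammaSet_inter_subset_of_isChild {H : SimpleGraph V} (hT : T.IsTree)
    (hD : IsTreeDecompOn H Set.univ T β) {t t₁ t₂ : ι} (h₁ : IsChild T r t t₁)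
    (h₂ : IsChild T r t t₂) (h₁₂ : t₁ ≠ t₂) :
    gammaSet T r β t₁ ∩ gammaSet T r β t₂ ⊆ β t₂ := by
  rintro v ⟨hv₁, hv₂⟩
  obtain ⟨s₁, hs₁, hvs₁⟩ := mem_gammaSet.mp hv₁
  obtain ⟨s₂, hs₂, hvs₂⟩ := mem_gammaSet.mp hv₂
  have hns₁ : ¬ Desc T r t₂ s₁ := fun h => h₁₂ (h₁.eq_of_desc hT h₂ hs₁ h)
  exact hD.mem_bag_of_mem_support (Set.mem_univ v) hvs₁ hvs₂
    (mem_support_of_desc_of_not_desc hns₁ hs₂)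

end Decomposition

section DerivedDecomposition

variable {V ι : Type*} {B : SimpleGraph V} {W U : Set V} {T : SimpleGraph ι} {r : ι}
  {β : ι → Set V}

lemma originalSet_eq (t : ι) :
    originalSet B W U T r β t = β t ∩ (W ∪ ⋃ s ∈ β t ∩ U, B.neighborSet s) := by
  ext v
  simp only [originalSet, derivedBag, Set.mem_inter_iff, Set.mem_union, Set.mem_iUnion,
    exists_prop]
  have : v ∈ β t → v ∈ gammaSet T r β t := fun hv => bag_subset_gammaSet t hv
  tauto

lemma fakeSet_eq (t : ι) :
    fakeSet B W U T r β t = ((⋃ s ∈ β t ∩ U, B.neighborSet s) ∩ gammaSet T r β t) \ β t := by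
  ext v
  simp only [fakeSet, derivedBag, Set.mem_sdiff, Set.mem_inter_iff, Set.mem_union,
    Set.mem_iUnion, exists_prop]
  tauto

lemma originalSet_congr {a b : ι} (h : β a = β b) :
    originalSet B W U T r β a = originalSet B W U T r β b := by
  rw [originalSet_eq, originalSet_eq, h]

lemma Desc.fakeSet_subset {a b : ι} (h : Desc T r a b) (hβ : β b = β a) :
    fakeSet B W U T r β b ⊆ fakeSet B W U T r β a := by
  rw [fakeSet_eq, fakeSet_eq, hβ]
  exact Set.sdiff_subset_sdiff_left (Set.inter_subset_inter_right _ h.gammaSet_subset)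

lemma fakeSet_inter_eq_empty_of_isChild {H : SimpleGraph V} (hT : T.IsTree)
    (hD : IsTreeDecompOn H Set.univ T β) {t t₁ t₂ : ι} (h₁ : IsChild T r t t₁)
    (h₂ : IsChild T r t t₂) (h₁₂ : t₁ ≠ t₂) :
    fakeSet B W U T r β t₁ ∩ fakeSet B W U T r β t₂ = ∅ := by
  refine Set.eq_empty_iff_forall_notMem.mpr fun v ⟨hv₁, hv₂⟩ => ?_
  rw [fakeSet_eq] at hv₁ hv₂
  exact hv₂.2 (gammaSet_inter_subset_of_isChild hT hD h₁ h₂ h₁₂ ⟨hv₁.1.2, hv₂.1.2⟩)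

lemma fakeSet_eq_biUnion_isChild (hT : T.IsTree) {t : ι}
    (hβ : ∀ c, IsChild T r t c → β c = β t) :
    fakeSet B W U T r β t = ⋃ c ∈ {c | IsChild T r t c}, fakeSet B W U T r β c := by
  refine subset_antisymm (fun v hv => ?_)
    (Set.iUnion₂_subset fun c hc => hc.2.fakeSet_subset (hβ c hc))
  rw [fakeSet_eq, gammaSet_eq_union_isChild hT] at hv
  obtain ⟨⟨hvN, hvβ | hvγ⟩, hvt⟩ := hv
  · exact absurd hvβ hvt
  obtain ⟨c, hc, hvc⟩ := Set.mem_iUnion₂.mp hvγ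
  refine Set.mem_biUnion hc ?_
  rw [fakeSet_eq, hβ c hc]
  exact ⟨⟨hvN, hvc⟩, hvt⟩

lemma IsJoinNode.bag_eq_of_isChild {t c : ι} (ht : IsJoinNode T r β t)
    (hc : IsChild T r t c) : β c = β t := by
  obtain ⟨a, b, -, -, -, hchild, ha, hb⟩ := ht
  obtain rfl | rfl := hchild c hc
  exacts [ha.symm, hb.symm]

lemma IsJoinNode.setOf_isChild_eq {t t₁ t₂ : ι} (ht : IsJoinNode T r β t)
    (h₁ : IsChild T r t t₁) (h₂ : IsChild T r t t₂) (h₁₂ : t₁ ≠ t₂) :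
    {c | IsChild T r t c} = {t₁, t₂} := by
  obtain ⟨a, b, -, -, -, hchild, -, -⟩ := ht
  ext c
  refine ⟨fun hc => ?_, by rintro (rfl | rfl) <;> assumption⟩
  have := hchild c hc
  have := hchild t₁ h₁
  have := hchild t₂ h₂
  grind

end DerivedDecomposition

theorem stmt_3_general {V : Type*} {ι : Type*} (B : SimpleGraph V) (W U : Set V)
    (T : SimpleGraph ι) (r : ι) (hT : T.IsTree) (β : ι → Set V)
    (hD : IsTreeDecompOn B Set.univ T β)
    (t t₁ t₂ : ι) (ht : IsJoinNode T r β t)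
    (h₁ : IsChild T r t t₁) (h₂ : IsChild T r t t₂) (h₁₂ : t₁ ≠ t₂) :
    originalSet B W U T r β t = originalSet B W U T r β t₁ ∧
      originalSet B W U T r β t₁ = originalSet B W U T r β t₂ ∧
      cliquesAt B U β t = cliquesAt B U β t₁ ∧
      cliquesAt B U β t₁ = cliquesAt B U β t₂ ∧
      fakeSet B W U T r β t₁ ∩ fakeSet B W U T r β t₂ = ∅ ∧
      fakeSet B W U T r β t = fakeSet B W U T r β t₁ ∪ fakeSet B W U T r β t₂ := by
  have hβ₁ : β t₁ = β t := ht.bag_eq_of_isChild h₁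
  have hβ₂ : β t₂ = β t := ht.bag_eq_of_isChild h₂
  refine ⟨originalSet_congr hβ₁.symm, originalSet_congr (hβ₁.trans hβ₂.symm),
    by simp only [cliquesAt, hβ₁], by simp only [cliquesAt, hβ₁, hβ₂],
    fakeSet_inter_eq_empty_of_isChild hT hD h₁ h₂ h₁₂, ?_⟩
  rw [fakeSet_eq_biUnion_isChild hT fun c => ht.bag_eq_of_isChild,
    ht.setOf_isChild_eq h₁ h₂ h₁₂, Set.biUnion_pair]

/-- at a join node `t` with children `t₁` and `t₂`:
`Original(t) = Original(t₁) = Original(t₂)`, `Cliques(t) = Cliques(t₁) = Cliques(t₂)`,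
`Fake(t₁) ∩ Fake(t₂) = ∅`, and `Fake(t) = Fake(t₁) ∪ Fake(t₂)`. -/
theorem stmt_3 {V : Type*} {ι : Type*} (B : SimpleGraph V) (W U : Set V)
    (hbip : IsBipartition B W U)
    (T : SimpleGraph ι) (r : ι) (hT : T.IsTree) (β : ι → Set V)
    (hD : IsTreeDecompOn B Set.univ T β) (hnice : IsNice T r β)
    (t t₁ t₂ : ι) (ht : IsJoinNode T r β t)
    (h₁ : IsChild T r t t₁) (h₂ : IsChild T r t t₂) (h₁₂ : t₁ ≠ t₂) :
    originalSet B W U T r β t = originalSet B W U T r β t₁ ∧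
      originalSet B W U T r β t₁ = originalSet B W U T r β t₂ ∧
      cliquesAt B U β t = cliquesAt B U β t₁ ∧
      cliquesAt B U β t₁ = cliquesAt B U β t₂ ∧
      fakeSet B W U T r β t₁ ∩ fakeSet B W U T r β t₂ = ∅ ∧
      fakeSet B W U T r β t = fakeSet B W U T r β t₁ ∪ fakeSet B W U T r β t₂ :=
  stmt_3_general B W U T r hT β hD t t₁ t₂ ht h₁ h₂ h₁₂
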